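/- Let u, v be non-negative bounded lower semi-continuous real-valued functions on a separable metric space K. Then for every countable ordinal α, osc_α(u - v) ≤ osc(u + v), where osc h = osc_1 h. -/

import Mathlib

open Filter Topology
open scoped ENNReal

/-- The upper semi-continuous envelope `Uh(x) = limsup_{y → x} h(y)`
(non-exclusive limsup, taken along the full neighborhood filter). -/
noncomputable def uEnv {K : Type*} [TopologicalSpace K] (h : K → ℝ≥0∞) : K → ℝ≥0∞ :=
  fun x => Filter.limsup h (nhds x)

/-- The transfinite oscillations of a complex-valued function:
`osc_0 f ≡ 0`; `osc~_{α+1} f (x) = limsup_{y→x} (|f y - f x| + osc_α f y)`;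
`osc~_β f = sup_{α<β} osc_α f` for limit `β`; `osc_β f = U (osc~_β f)`. -/
noncomputable def oscC {K : Type*} [TopologicalSpace K] (f : K → ℂ) (α : Ordinal) :
    K → ℝ≥0∞ :=
  Ordinal.limitRecOn (motive := fun _ => K → ℝ≥0∞) α
    (fun _ => 0)
    (fun _ prev => uEnv (fun x =>
      Filter.limsup (fun y => (‖f y - f x‖₊ : ℝ≥0∞) + prev y) (nhds x)))
    (fun o _ ih => uEnv (fun x => ⨆ (β : Ordinal) (hβ : β < o), ih β hβ x))

/-- Upper semi-continuous envelope for extended-real-valued functions. -/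
noncomputable def uEnvE {K : Type*} [TopologicalSpace K] (h : K → EReal) : K → EReal :=
  fun x => Filter.limsup h (nhds x)

/-- The transfinite oscillations of a real-valued function (values in `[-∞,∞]`,
though they are always in `[0,∞]`). -/
noncomputable def oscR {K : Type*} [TopologicalSpace K] (f : K → ℝ) (α : Ordinal) :
    K → EReal :=
  Ordinal.limitRecOn (motive := fun _ => K → EReal) α
    (fun _ => 0)
    (fun _ prev => uEnvE (fun x =>
      Filter.limsup (fun y => ((|f y - f x| : ℝ) : EReal) + prev y) (nhds x)))
    (fun o _ ih => uEnvE (fun x => ⨆ (β : Ordinal) (hβ : β < o), ih β hβ x))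

/-- The transfinite positive oscillations `v_α f` of Kechris–Louveau: defined as the
transfinite oscillations but with `f y - f x` in place of `|f y - f x|`. -/
noncomputable def posOscR {K : Type*} [TopologicalSpace K] (f : K → ℝ) (α : Ordinal) :
    K → EReal :=
  Ordinal.limitRecOn (motive := fun _ => K → EReal) α
    (fun _ => 0)
    (fun _ prev => uEnvE (fun x =>
      Filter.limsup (fun y => ((f y - f x : ℝ) : EReal) + prev y) (nhds x)))
    (fun o _ ih => uEnvE (fun x => ⨆ (β : Ordinal) (hβ : β < o), ih β hβ x))

section Aux

variable {K : Type*} [TopologicalSpace K]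

lemma oscR_zero (f : K → ℝ) : oscR f 0 = fun _ => (0 : EReal) := by
  simp [oscR, Ordinal.limitRecOn_zero]

lemma oscR_succ (f : K → ℝ) (α : Ordinal) :
    oscR f (Order.succ α) = uEnvE (fun x =>
      Filter.limsup (fun y => ((|f y - f x| : ℝ) : EReal) + oscR f α y) (nhds x)) := by
  simp only [oscR, Ordinal.limitRecOn_succ]

lemma oscR_limit (f : K → ℝ) (o : Ordinal) (ho : Order.IsSuccLimit o) :
    oscR f o = uEnvE (fun x => ⨆ (β : Ordinal) (_ : β < o), oscR f β x) := by
  simp only [oscR, Ordinal.limitRecOn_limit _ _ _ _ ho]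

lemma le_uEnvE (h : K → EReal) (x : K) : h x ≤ uEnvE h x := by
  refine le_limsup_of_frequently_le' ?_
  have : ∃ᶠ y in pure x, h x ≤ h y := (Filter.eventually_pure.2 (le_refl (h x))).frequently
  exact this.filter_mono (pure_le_nhds x)

lemma uEnvE_mono {h₁ h₂ : K → EReal} (h : ∀ y, h₁ y ≤ h₂ y) (x : K) :
    uEnvE h₁ x ≤ uEnvE h₂ x := by
  unfold uEnvE
  exact Filter.limsup_le_limsup (Filter.Eventually.of_forall h :
    ∀ᶠ y in nhds x, h₁ y ≤ h₂ y)

/-- The upper envelope is upper semicontinuous: `limsup (U h) (𝓝 x) ≤ U h x`. -/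
lemma limsup_uEnvE_le (h : K → EReal) (x : K) :
    Filter.limsup (uEnvE h) (nhds x) ≤ uEnvE h x := by
  have hb := nhds_basis_opens x
  have key : uEnvE h x = ⨅ s, ⨅ (_ : x ∈ s ∧ IsOpen s), ⨆ a ∈ s, h a :=
    hb.limsup_eq_iInf_iSup
  rw [key]
  refine le_iInf₂ fun s hs => ?_
  refine Filter.limsup_le_of_le (by isBoundedDefault) ?_
  filter_upwards [hs.2.mem_nhds hs.1] with y hy
  refine Filter.limsup_le_of_le (by isBoundedDefault) ?_
  filter_upwards [hs.2.mem_nhds hy] with a ha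
  exact le_iSup₂ (f := fun a (_ : a ∈ s) => h a) a ha

/-- `a ≤ b` if `a ≤ b + ε` for every positive real `ε`. -/
lemma EReal.le_of_forall_add_eps {a b : EReal} (h : ∀ ε : ℝ, 0 < ε → a ≤ b + (ε : EReal)) :
    a ≤ b := by
  induction b with
  | bot => simpa using h 1 one_pos
  | coe b =>
      by_contra hab
      push_neg at hab
      obtain ⟨c, hbc, hca⟩ := exists_between hab
      induction c with
      | bot => exact absurd hbc (by simp)
      | coe c =>
          have hε : (0:ℝ) < c - b := _root_.sub_pos.2 (EReal.coe_lt_coe_iff.1 hbc)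
          have h2 := h (c - b) hε
          rw [← EReal.coe_add] at h2
          have hbc' : b + (c - b) = c := by ring
          rw [hbc'] at h2
          exact absurd hca (not_lt.2 h2)
      | top => exact absurd hca (not_lt.2 le_top)
  | top => exact le_top

/-- limsup commutes with adding a real constant, over `EReal`. -/
lemma EReal.limsup_add_coe_const {β : Type*} (l : Filter β) [l.NeBot] (g : β → EReal) (c : ℝ) :
    Filter.limsup (fun y => g y + (c : EReal)) l = Filter.limsup g l + (c : EReal) := by
  apply le_antisymm
  · have := EReal.limsup_add_le (f := l) (u := g) (v := fun _ => (c : EReal))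
      (Or.inr (by simp [Filter.limsup_const])) (Or.inr (by simp [Filter.limsup_const]))
    simpa [Filter.limsup_const, Pi.add_def] using this
  · have := EReal.le_limsup_add (f := l) (u := g) (v := fun _ => (c : EReal))
    simpa [Filter.liminf_const, Pi.add_def] using this

end Aux

section Main

variable {K : Type*} [TopologicalSpace K]

/-- The key lemma: for `u, v` lower semicontinuous, all transfinite oscillations of `u - v`
are bounded by `U(u+v) - (u+v)`. -/
lemma oscR_le_env_sub (u v : K → ℝ)
    (hul : LowerSemicontinuous u) (hvl : LowerSemicontinuous v) (α : Ordinal) :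
    ∀ x : K, oscR (fun y => u y - v y) α x
      ≤ uEnvE (fun y => ((u y + v y : ℝ) : EReal)) x - ((u x + v x : ℝ) : EReal) := by
  set W : K → EReal := fun y => ((u y + v y : ℝ) : EReal) with hW
  set T : K → EReal := fun y => uEnvE W y - ((u y + v y : ℝ) : EReal) with hT
  -- rewrite T as an addition
  have hTdef : ∀ y, T y = uEnvE W y + ((-(u y + v y) : ℝ) : EReal) := by
    intro y
    show uEnvE W y - ((u y + v y : ℝ) : EReal) = _
    rw [sub_eq_add_neg, EReal.coe_neg]
  -- upper semicontinuity of T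
  have uscT : ∀ x : K, Filter.limsup T (nhds x) ≤ T x := by
    intro x
    refine EReal.le_of_forall_add_eps fun ε hε => ?_
    have hev : ∀ᶠ y in nhds x, u x + v x - ε < u y + v y := by
      filter_upwards [hul x (u x - ε/2) (by linarith), hvl x (v x - ε/2) (by linarith)]
        with y h1 h2
      linarith
    have hb : ∀ᶠ y in nhds x, T y ≤ uEnvE W y + ((ε - (u x + v x) : ℝ) : EReal) := by
      filter_upwards [hev] with y hy
      rw [hTdef y]
      exact add_le_add_right (EReal.coe_le_coe_iff.2 (by linarith)) _
    calc Filter.limsup T (nhds x)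
        ≤ Filter.limsup (fun y => uEnvE W y + ((ε - (u x + v x) : ℝ) : EReal)) (nhds x) :=
          Filter.limsup_le_limsup hb
      _ = Filter.limsup (uEnvE W) (nhds x) + ((ε - (u x + v x) : ℝ) : EReal) :=
          EReal.limsup_add_coe_const _ _ _
      _ ≤ uEnvE W x + ((ε - (u x + v x) : ℝ) : EReal) :=
          add_le_add_left (limsup_uEnvE_le W x) _
      _ = T x + (ε : EReal) := by
          rw [hTdef x, show (ε - (u x + v x) : ℝ) = -(u x + v x) + ε by ring,
            EReal.coe_add, ← add_assoc]
  -- the key successor-step estimate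
  have keyC : ∀ x : K,
      Filter.limsup (fun y => ((|((u y - v y) - (u x - v x))| : ℝ) : EReal) + T y) (nhds x)
        ≤ T x := by
    intro x
    refine EReal.le_of_forall_add_eps fun ε hε => ?_
    have hev : ∀ᶠ y in nhds x, u x - ε/2 < u y ∧ v x - ε/2 < v y :=
      (hul x (u x - ε/2) (by linarith)).and (hvl x (v x - ε/2) (by linarith))
    have hb : ∀ᶠ y in nhds x, ((|((u y - v y) - (u x - v x))| : ℝ) : EReal) + T y
        ≤ uEnvE W y + ((ε - (u x + v x) : ℝ) : EReal) := by
      filter_upwards [hev] with y ⟨h1, h2⟩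
      have habs : |((u y - v y) - (u x - v x))| ≤ (u y + v y) - (u x + v x) + ε := by
        rw [abs_le]; constructor <;> linarith
      rw [hTdef y]
      calc ((|((u y - v y) - (u x - v x))| : ℝ) : EReal)
            + (uEnvE W y + ((-(u y + v y) : ℝ) : EReal))
          = uEnvE W y + (((|((u y - v y) - (u x - v x))| + -(u y + v y) : ℝ)) : EReal) := by
            rw [EReal.coe_add]; abel
        _ ≤ uEnvE W y + ((ε - (u x + v x) : ℝ) : EReal) :=
            add_le_add_right (EReal.coe_le_coe_iff.2 (by linarith)) _
    calc Filter.limsup (fun y => ((|((u y - v y) - (u x - v x))| : ℝ) : EReal) + T y) (nhds x)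
        ≤ Filter.limsup (fun y => uEnvE W y + ((ε - (u x + v x) : ℝ) : EReal)) (nhds x) :=
          Filter.limsup_le_limsup hb
      _ = Filter.limsup (uEnvE W) (nhds x) + ((ε - (u x + v x) : ℝ) : EReal) :=
          EReal.limsup_add_coe_const _ _ _
      _ ≤ uEnvE W x + ((ε - (u x + v x) : ℝ) : EReal) :=
          add_le_add_left (limsup_uEnvE_le W x) _
      _ = T x + (ε : EReal) := by
          rw [hTdef x, show (ε - (u x + v x) : ℝ) = -(u x + v x) + ε by ring,
            EReal.coe_add, ← add_assoc]
  -- transfinite induction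
  induction α using Ordinal.limitRecOn with
  | zero =>
      intro x
      rw [oscR_zero]
      show (0 : EReal) ≤ uEnvE W x - ((u x + v x : ℝ) : EReal)
      rw [EReal.le_sub_iff_add_le (Or.inl (EReal.coe_ne_bot _)) (Or.inl (EReal.coe_ne_top _)),
        zero_add]
      exact le_uEnvE W x
  | add_one α ih =>
      intro x
      rw [Ordinal.add_one_eq_succ, oscR_succ]
      have hg : ∀ x' : K,
          Filter.limsup (fun y =>
            ((|((u y - v y) - (u x' - v x'))| : ℝ) : EReal)
              + oscR (fun y => u y - v y) α y) (nhds x') ≤ T x' := by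
        intro x'
        refine le_trans (Filter.limsup_le_limsup (Filter.Eventually.of_forall fun y =>
          add_le_add_right (ih y) _)) (keyC x')
      calc uEnvE (fun x' => Filter.limsup (fun y =>
            ((|((fun y => u y - v y) y - (fun y => u y - v y) x')| : ℝ) : EReal)
              + oscR (fun y => u y - v y) α y) (nhds x')) x
          ≤ uEnvE T x := uEnvE_mono (fun x' => hg x') x
        _ ≤ T x := uscT x
  | limit o ho ih =>
      intro x
      rw [oscR_limit _ _ ho]
      calc uEnvE (fun x' => ⨆ (β : Ordinal) (_ : β < o), oscR (fun y => u y - v y) β x') x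
          ≤ uEnvE T x := uEnvE_mono (fun x' => iSup₂_le fun β hβ => ih β hβ x') x
        _ ≤ T x := uscT x

end Main

/-- for non-negative bounded lower semi-continuous u, v on a
separable metric space, osc_α(u - v) ≤ osc(u + v) for every countable α. -/
theorem stmt16 {K : Type*} [MetricSpace K] [TopologicalSpace.SeparableSpace K]
    (u v : K → ℝ)
    (hu0 : ∀ x, 0 ≤ u x) (hv0 : ∀ x, 0 ≤ v x)
    (hub : ∃ M : ℝ, ∀ x, u x ≤ M) (hvb : ∃ M : ℝ, ∀ x, v x ≤ M)
    (hul : LowerSemicontinuous u) (hvl : LowerSemicontinuous v)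
    (α : Ordinal) (hα : α.card ≤ Cardinal.aleph0) :
    ∀ x : K, oscR (fun y => u y - v y) α x ≤ oscR (fun y => u y + v y) 1 x := by
  intro x
  set W : K → EReal := fun y => ((u y + v y : ℝ) : EReal) with hW
  refine le_trans (oscR_le_env_sub u v hul hvl α x) ?_
  -- show U W x - W x ≤ oscR (u+v) 1 x
  have h1 : oscR (fun y => u y + v y) 1
      = uEnvE (fun x' => Filter.limsup (fun y =>
          ((|((u y + v y) - (u x' + v x'))| : ℝ) : EReal)
            + oscR (fun y => u y + v y) 0 y) (nhds x')) := by
    rw [show (1 : Ordinal) = Order.succ 0 from (Ordinal.succ_zero).symm, oscR_succ]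
  rw [h1]
  refine le_trans ?_ (le_uEnvE _ x)
  have h2 : uEnvE W x - ((u x + v x : ℝ) : EReal)
      = Filter.limsup (fun y => W y + ((-(u x + v x) : ℝ) : EReal)) (nhds x) := by
    rw [EReal.limsup_add_coe_const, sub_eq_add_neg, EReal.coe_neg]
    rfl
  rw [h2]
  refine Filter.limsup_le_limsup (Filter.Eventually.of_forall fun y => ?_)
  rw [oscR_zero]
  show W y + ((-(u x + v x) : ℝ) : EReal)
      ≤ ((|((u y + v y) - (u x + v x))| : ℝ) : EReal) + (0 : EReal)
  have : W y + ((-(u x + v x) : ℝ) : EReal)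
      = (((u y + v y) - (u x + v x) : ℝ) : EReal) := by
    rw [hW, ← EReal.coe_add]
    norm_cast
  rw [this, add_zero]
  exact EReal.coe_le_coe_iff.2 (le_abs_self _)
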